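/- Suppose u, ρ, B solve the abstract system ⟨∂_t(δℓ/δu), v⟩ + a(δℓ/δu, u, v) + b(δℓ/δρ, ρ, v) + c(δℓ/δB, B, v) = d(u,v) for all v, ⟨∂_t ρ, σ⟩ + b(σ,ρ,u) = 0 for all σ, and ⟨∂_t B, C⟩ + c(C,B,u) = e(B,C) for all C. Then the total energy E = ⟨δℓ/δu, u⟩ - ℓ(u,ρ,B) satisfies dE/dt = d(u,u) - e(B, δℓ/δB), provided a(w,u,v) = -a(w,v,u) for all w,u,v. -/
import Mathlib

open RealInnerProductSpace

/-- abstract energy balance `dE/dt = d(u,u) - e(B, δℓ/δB)` for the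
system `⟨∂ₜ(δℓ/δu),v⟩ + a(δℓ/δu,u,v) + b(δℓ/δρ,ρ,v) + c(δℓ/δB,B,v) = d(u,v)`,
`⟨∂ₜρ,σ⟩ + b(σ,ρ,u) = 0`, `⟨∂ₜB,C⟩ + c(C,B,u) = e(B,C)`, with `a` antisymmetric
in its last two arguments.  Here `m = δℓ/δu`, `δρ = δℓ/δρ`, `δB = δℓ/δB`. -/
theorem abstract_energy_balance {X Y Z : Type*}
    [NormedAddCommGroup X] [InnerProductSpace ℝ X]
    [NormedAddCommGroup Y] [InnerProductSpace ℝ Y]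
    [NormedAddCommGroup Z] [InnerProductSpace ℝ Z]
    (ℓ : X → Y → Z → ℝ)
    (u u' m m' : ℝ → X) (ρ ρ' δρ : ℝ → Y) (B B' δB : ℝ → Z)
    (a : X → X → X → ℝ) (b : Y → Y → X → ℝ) (c : Z → Z → X → ℝ)
    (d : X → X → ℝ) (e : Z → Z → ℝ)
    (hu : ∀ t, HasDerivAt u (u' t) t) (hρ : ∀ t, HasDerivAt ρ (ρ' t) t)
    (hB : ∀ t, HasDerivAt B (B' t) t) (hm : ∀ t, HasDerivAt m (m' t) t)
    (hchain : ∀ t, HasDerivAt (fun s => ℓ (u s) (ρ s) (B s))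
      (⟪m t, u' t⟫ + ⟪δρ t, ρ' t⟫ + ⟪δB t, B' t⟫) t)
    (hasym : ∀ w v₁ v₂, a w v₁ v₂ = -(a w v₂ v₁))
    (heq1 : ∀ t v, ⟪m' t, v⟫ + a (m t) (u t) v + b (δρ t) (ρ t) v
      + c (δB t) (B t) v = d (u t) v)
    (heq2 : ∀ t σ, ⟪ρ' t, σ⟫ + b σ (ρ t) (u t) = 0)
    (heq3 : ∀ t C, ⟪B' t, C⟫ + c C (B t) (u t) = e (B t) C) :
    ∀ t, deriv (fun s => ⟪m s, u s⟫ - ℓ (u s) (ρ s) (B s)) t =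
      d (u t) (u t) - e (B t) (δB t) := by
  intro t
  have hE : HasDerivAt (fun s => ⟪m s, u s⟫ - ℓ (u s) (ρ s) (B s))
      ((⟪m t, u' t⟫ + ⟪m' t, u t⟫) - (⟪m t, u' t⟫ + ⟪δρ t, ρ' t⟫ + ⟪δB t, B' t⟫)) t :=
    ((hm t).inner ℝ (hu t)).sub (hchain t)
  rw [hE.deriv]
  have h1 := heq1 t (u t)
  have h2 := heq2 t (δρ t)
  have h3 := heq3 t (δB t)
  have ha : a (m t) (u t) (u t) = 0 := by
    have := hasym (m t) (u t) (u t); linarith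
  have hρs : ⟪δρ t, ρ' t⟫ = ⟪ρ' t, δρ t⟫ := real_inner_comm _ _
  have hBs : ⟪δB t, B' t⟫ = ⟪B' t, δB t⟫ := real_inner_comm _ _
  rw [hρs, hBs]
  linarith
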